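/- Let q1, q2 > 0, d1, d2 ∈ ℝ, p ∈ ℝ with p ≠ 0, let n ≥ 1, let A be an n×n real matrix, B ∈ ℝⁿ, and K ∈ ℝⁿ. Define λ(x) = Kᵀ e^{Ax/q2} and γ(x) = p Kᵀ e^{−Ax/q1} (row-vector-valued functions on [0,1]). Let φ, ψ, Ψ, Φ : 𝒟 → ℝ be continuously differentiable on the triangle 𝒟 = {(x,y) : 0 ≤ y ≤ x ≤ 1} and satisfy q2 ∂y ψ − q1 ∂x ψ − d1 φ = 0, q1 ∂x φ + q1 ∂y φ + d2 ψ = 0, q2 ∂x Ψ − q1 ∂y Ψ − d2 Φ = 0, q2 ∂x Φ + q2 ∂y Φ − d1 Ψ = 0 on 𝒟, with boundary conditions ψ(x,x) = d1/(q1+q2), φ(x,0) = (q2/(q1 p)) ψ(x,0) − (1/(q1 p)) γ(x)B, Ψ(x,x) = −d2/(q1+q2), Φ(x,0) = (q1 p/q2) Ψ(x,0) + (1/q2) λ(x)B for x ∈ [0,1]. Let T > 0 and let z, w : [0,1] × [0,T] → ℝ be continuously differentiable solutions of ∂t z = −q1 ∂x z + d1 w and ∂t w = q2 ∂x w + d2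 z with z(0,t) = p w(0,t), and Y : [0,T] → ℝⁿ continuously differentiable with Ẏ(t) = A Y(t) + B w(0,t). Define α(x,t) = z(x,t) − ∫₀ˣ φ(x,y) z(y,t) dy − ∫₀ˣ ψ(x,y) w(y,t) dy − γ(x) Y(t) and β(x,t) = w(x,t) − ∫₀ˣ Ψ(x,y) z(y,t) dy − ∫₀ˣ Φ(x,y) w(y,t) dy − λ(x) Y(t). Then for all (x,t) ∈ [0,1] × [0,T]: ∂t α(x,t) = −q1 ∂x α(x,t), ∂t β(x,t) = q2 ∂x β(x,t), α(0,t) = p β(0,t), and β(0,t) = w(0,t) − Kᵀ Y(t). -/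

import Mathlib

/-!
Differentiate α and β in `x` by the Leibniz rule along the triangle and in `t` under the
integral sign, and substitute the plant equations into the `t`-derivatives; integrating the
`z_x` and `w_x` terms by parts in `y` turns every term into a multiple of an integral over
`[0, x]`, a value at `y = x` or a value at `y = 0`. The kernel equations make the integrals
cancel, the conditions on the diagonal the terms at `y = x`, and the conditions at `y = 0`
together with `z(0,t) = p w(0,t)` the terms at `y = 0`. The `Y`-terms cancel because
`λ' = λ A / q2` and `γ' = -γ A / q1`.
-/

open Set MeasureTheory
open scoped Matrix

theorem ContinuousOn.exists_continuous_eqOn {X : Type*} [TopologicalSpace X] [NormalSpace X]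
    {s : Set X} {f : X → ℝ} (hf : ContinuousOn f s) (hs : IsClosed s) :
    ∃ g : X → ℝ, Continuous g ∧ EqOn g f s := by
  obtain ⟨g, hg⟩ := ContinuousMap.exists_restrict_eq hs ⟨s.domRestrict f, hf.domRestrict⟩
  exact ⟨g, g.continuous, fun q hq => congrFun (congrArg ContinuousMap.toFun hg) ⟨q, hq⟩⟩

theorem eq_add_integral_of_hasDerivWithinAt {f f' : ℝ → ℝ} {a b c : ℝ} (hab : a ≤ b)
    (hbc : b ≤ c) (hf : ∀ y ∈ Icc a c, HasDerivWithinAt f (f' y) (Icc a c) y)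
    (hf' : ContinuousOn f' (Icc a c)) :
    f b = f a + ∫ y in a..b, f' y := by
  have hsub : Icc a b ⊆ Icc a c := Icc_subset_Icc le_rfl hbc
  rw [intervalIntegral.integral_eq_sub_of_hasDeriv_right_of_le hab
    (fun y hy => (hf y (hsub hy)).continuousWithinAt.mono hsub)
    (fun y hy => (hf y ⟨hy.1.le, hy.2.le.trans hbc⟩).mono_of_mem_nhdsWithin
      (Icc_mem_nhdsGT_of_mem ⟨hy.1.le, hy.2.trans_le hbc⟩))
    ((hf'.mono hsub).intervalIntegrable_of_Icc hab)]
  ring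

theorem hasDerivWithinAt_of_eq_add_integral {f D : ℝ → ℝ} {s : Set ℝ} {a x : ℝ}
    (hD : Continuous D) (hf : ∀ y ∈ s, f y = f a + ∫ u in a..y, D u) (hx : x ∈ s) :
    HasDerivWithinAt f (D x) s x := by
  have hprim : HasDerivAt (fun y => f a + ∫ u in a..y, D u) (D x) x :=
    (intervalIntegral.integral_hasDerivAt_right (hD.intervalIntegrable _ _)
      (hD.stronglyMeasurableAtFilter _ _) hD.continuousAt).const_add _
  exact hprim.hasDerivWithinAt.congr hf (hf x hx)

theorem continuous_parametric_intervalIntegral_lower {k : ℝ → ℝ → ℝ}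
    (hk : Continuous (Function.uncurry k)) (b : ℝ) :
    Continuous fun y => ∫ s in y..b, k y s := by
  have hsplit : ∀ y, ∫ s in y..b, k y s = (∫ s in (0:ℝ)..b, k y s) - ∫ s in (0:ℝ)..y, k y s :=
    fun y => by
      have hky : Continuous (k y) := hk.comp (continuous_const.prodMk continuous_id)
      exact (intervalIntegral.integral_interval_sub_left (hky.intervalIntegrable _ _)
        (hky.intervalIntegrable _ _)).symm
  simp_rw [hsplit]
  exact (intervalIntegral.continuous_parametric_intervalIntegral_of_continuous' hk 0 b).sub
    (intervalIntegral.continuous_parametric_intervalIntegral_of_continuous hk continuous_id)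

theorem intervalIntegral_intervalIntegral_swap_triangle {k : ℝ → ℝ → ℝ}
    (hk : Continuous (Function.uncurry k)) {a b : ℝ} (hab : a ≤ b) :
    ∫ y in a..b, ∫ s in y..b, k s y = ∫ s in a..b, ∫ y in a..s, k s y := by
  set g : ℝ → ℝ → ℝ := fun y s => (Ioi y).indicator (fun s => k s y) s
  have hint : IntegrableOn (Function.uncurry g) (uIoc a b ×ˢ uIoc a b) := by
    have hcont : Continuous fun q : ℝ × ℝ => k q.2 q.1 := hk.comp continuous_swap
    have hmeas : MeasurableSet {q : ℝ × ℝ | q.1 < q.2} :=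
      measurableSet_lt measurable_fst measurable_snd
    exact ((hcont.continuousOn.integrableOn_compact (isCompact_uIcc.prod isCompact_uIcc)).mono_set
      (prod_mono uIoc_subset_uIcc uIoc_subset_uIcc)).indicator hmeas
  calc ∫ y in a..b, ∫ s in y..b, k s y = ∫ y in a..b, ∫ s in a..b, g y s := by
        refine intervalIntegral.integral_congr_ae (Filter.Eventually.of_forall fun y hy => ?_)
        rw [uIoc_of_le hab] at hy
        rw [intervalIntegral.integral_of_le hab, setIntegral_indicator measurableSet_Ioi,
          intervalIntegral.integral_of_le hy.2, Ioc_inter_Ioi, max_eq_right hy.1.le]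
    _ = ∫ s in a..b, ∫ y in a..b, g y s := intervalIntegral_intervalIntegral_swap hint
    _ = ∫ s in a..b, ∫ y in a..s, k s y := by
        refine intervalIntegral.integral_congr_ae (Filter.Eventually.of_forall fun s hs => ?_)
        rw [uIoc_of_le hab] at hs
        have hg : ∀ y, g y s = (Iio s).indicator (k s) y := fun y => by
          by_cases h : y < s <;> simp [g, h]
        simp_rw [hg]
        rw [intervalIntegral.integral_of_le hab, setIntegral_indicator measurableSet_Iio,
          intervalIntegral.integral_of_le hs.1.le, integral_Ioc_eq_integral_Ioo]
        congr 2
        ext y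
        simp only [mem_inter_iff, mem_Ioc, mem_Iio, mem_Ioo]
        exact ⟨fun h => ⟨h.1.1, h.2⟩, fun h => ⟨⟨h.1, h.2.le.trans hs.2⟩, h.2⟩⟩

theorem integral_mul_eq_of_eq_deriv_add {f f' g g' h k : ℝ → ℝ} {a b c₁ c₂ : ℝ} (hab : a ≤ b)
    (hf : ∀ y ∈ Icc a b, HasDerivWithinAt f (f' y) (Icc a b) y)
    (hg : ∀ y ∈ Icc a b, HasDerivWithinAt g (g' y) (Icc a b) y)
    (hf' : ContinuousOn f' (Icc a b)) (hg' : ContinuousOn g' (Icc a b))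
    (hh : ContinuousOn h (Icc a b)) (hk : ∀ y ∈ Icc a b, k y = c₁ * g' y + c₂ * h y) :
    ∫ y in a..b, f y * k y
      = c₁ * (f b * g b - f a * g a - ∫ y in a..b, f' y * g y) + c₂ * ∫ y in a..b, f y * h y := by
  have hfc : ContinuousOn f (Icc a b) := fun y hy => (hf y hy).continuousWithinAt
  rw [intervalIntegral.integral_congr fun y hy =>
      show f y * k y = c₁ * (f y * g' y) + c₂ * (f y * h y) by
        rw [hk y (uIcc_of_le hab ▸ hy)]; ring,
    intervalIntegral.integral_add (f := fun y => c₁ * (f y * g' y))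
      (g := fun y => c₂ * (f y * h y))
      (((hfc.mul hg').intervalIntegrable_of_Icc hab).const_mul _)
      (((hfc.mul hh).intervalIntegrable_of_Icc hab).const_mul _),
    intervalIntegral.integral_const_mul, intervalIntegral.integral_const_mul,
    intervalIntegral.integral_mul_deriv_eq_deriv_mul_of_hasDerivWithinAt
      (uIcc_of_le hab ▸ hf) (uIcc_of_le hab ▸ hg)
      (hf'.intervalIntegrable_of_Icc hab) (hg'.intervalIntegrable_of_Icc hab)]

theorem linear_combination_integral_mul_eq_zero {F₁ F₂ F₃ u : ℝ → ℝ} {a b c₁ c₂ c₃ : ℝ}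
    (hab : a ≤ b) (hF₁ : ContinuousOn F₁ (Icc a b)) (hF₂ : ContinuousOn F₂ (Icc a b))
    (hF₃ : ContinuousOn F₃ (Icc a b)) (hu : ContinuousOn u (Icc a b))
    (h : ∀ y ∈ Icc a b, c₁ * F₁ y + c₂ * F₂ y + c₃ * F₃ y = 0) :
    c₁ * (∫ y in a..b, F₁ y * u y) + c₂ * (∫ y in a..b, F₂ y * u y)
      + c₃ * (∫ y in a..b, F₃ y * u y) = 0 := by
  have hint : ∀ {F : ℝ → ℝ}, ContinuousOn F (Icc a b) →
      IntervalIntegrable (fun y => F y * u y) volume a b :=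
    fun hF => (hF.mul hu).intervalIntegrable_of_Icc hab
  rw [← intervalIntegral.integral_const_mul, ← intervalIntegral.integral_const_mul,
    ← intervalIntegral.integral_const_mul,
    ← intervalIntegral.integral_add ((hint hF₁).const_mul _) ((hint hF₂).const_mul _),
    ← intervalIntegral.integral_add (((hint hF₁).const_mul _).add ((hint hF₂).const_mul _))
      ((hint hF₃).const_mul _)]
  refine (intervalIntegral.integral_congr fun y hy => ?_).trans intervalIntegral.integral_zero
  linear_combination u y * h y (uIcc_of_le hab ▸ hy)

theorem HasDerivAt.dotProduct {ι : Type*} [Fintype ι] {u v : ℝ → ι → ℝ} {u' v' : ι → ℝ}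
    {x : ℝ} (hu : HasDerivAt u u' x) (hv : HasDerivAt v v' x) :
    HasDerivAt (fun s => u s ⬝ᵥ v s) (u' ⬝ᵥ v x + u x ⬝ᵥ v') x := by
  show HasDerivAt (fun s => ∑ i, u s i * v s i) (∑ i, u' i * v x i + ∑ i, u x i * v' i) x
  rw [← Finset.sum_add_distrib]
  exact HasDerivAt.fun_sum fun i _ => (hasDerivAt_pi.1 hu i).mul (hasDerivAt_pi.1 hv i)

theorem hasDerivAt_vecMul_exp_div_smul {ι : Type*} [Fintype ι] [DecidableEq ι] (K : ι → ℝ)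
    (A : Matrix ι ι ℝ) (c x : ℝ) :
    HasDerivAt (fun x => K ᵥ* NormedSpace.exp ((x / c) • A))
      (c⁻¹ • (K ᵥ* NormedSpace.exp ((x / c) • A) ᵥ* A)) x := by
  -- any Banach algebra norm on matrices will do; it only serves to differentiate `exp`
  let _ : SeminormedRing (Matrix ι ι ℝ) := Matrix.linftyOpSemiNormedRing
  let _ : NormedRing (Matrix ι ι ℝ) := Matrix.linftyOpNormedRing
  let _ : NormedAlgebra ℝ (Matrix ι ι ℝ) := Matrix.linftyOpNormedAlgebra
  have hexp : HasDerivAt (fun x => NormedSpace.exp ((x / c) • A))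
      ((1 / c) • (NormedSpace.exp ((x / c) • A) * A)) x := by
    have h1 : HasDerivAt (fun u : ℝ => NormedSpace.exp (u • A))
        (NormedSpace.exp ((x / c) • A) * A) (x / c) := hasDerivAt_exp_smul_const A (x / c)
    exact h1.scomp x ((hasDerivAt_id' x).div_const c)
  let L : Matrix ι ι ℝ →ₗ[ℝ] ι → ℝ :=
    { toFun := fun M => K ᵥ* M
      map_add' := fun M N => Matrix.vecMul_add M N K
      map_smul' := fun r M => Matrix.vecMul_smul K r M }
  rw [Matrix.vecMul_vecMul, ← Matrix.vecMul_smul, ← one_div]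
  exact L.toContinuousLinearMap.hasFDerivAt.comp_hasDerivAt x hexp

theorem hasDerivWithinAt_integral_mul_param {g : ℝ → ℝ} {u ut : ℝ → ℝ → ℝ} {x T t : ℝ}
    (hx : 0 ≤ x) (hg : ContinuousOn g (Icc 0 x))
    (hu : ContinuousOn (fun q : ℝ × ℝ => u q.1 q.2) (Icc 0 x ×ˢ Icc 0 T))
    (hut : ContinuousOn (fun q : ℝ × ℝ => ut q.1 q.2) (Icc 0 x ×ˢ Icc 0 T))
    (hderiv : ∀ y ∈ Icc 0 x, ∀ t ∈ Icc 0 T, HasDerivWithinAt (u y) (ut y t) (Icc 0 T) t)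
    (ht : t ∈ Icc 0 T) :
    HasDerivWithinAt (fun t' => ∫ y in (0:ℝ)..x, g y * u y t')
      (∫ y in (0:ℝ)..x, g y * ut y t) (Icc 0 T) t := by
  -- Extend `g` and `ut` continuously to the whole plane and exhibit the integral as a
  -- primitive in `t` of a continuous function, via the FTC in `t` and Fubini.
  obtain ⟨gb, hgb, hgbg⟩ := hg.exists_continuous_eqOn isClosed_Icc
  obtain ⟨U, hU, hUut⟩ := hut.exists_continuous_eqOn (isClosed_Icc.prod isClosed_Icc)
  have hgU : Continuous (Function.uncurry fun y s => gb y * U (y, s)) :=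
    (hgb.comp continuous_fst).mul hU
  have hS : Continuous fun s => ∫ y in (0:ℝ)..x, gb y * U (y, s) :=
    intervalIntegral.continuous_parametric_intervalIntegral_of_continuous'
      (f := fun s y => gb y * U (y, s)) (hgU.comp continuous_swap) 0 x
  have hrepr : ∀ t' ∈ Icc 0 T, (∫ y in (0:ℝ)..x, g y * u y t')
      = (∫ y in (0:ℝ)..x, g y * u y 0) + ∫ s in (0:ℝ)..t', ∫ y in (0:ℝ)..x, gb y * U (y, s) := by
    intro t' ht'
    have hsection : ∀ y ∈ Icc 0 x,
        g y * u y t' = g y * u y 0 + ∫ s in (0:ℝ)..t', gb y * U (y, s) := by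
      intro y hy
      rw [eq_add_integral_of_hasDerivWithinAt ht'.1 ht'.2 (hderiv y hy) (hut.uncurry_left y hy),
        mul_add, ← intervalIntegral.integral_const_mul, hgbg hy]
      refine congrArg _ (intervalIntegral.integral_congr fun s hs => ?_)
      rw [uIcc_of_le ht'.1] at hs
      simp only [hUut (mk_mem_prod hy ⟨hs.1, hs.2.trans ht'.2⟩)]
    have hu0 : ContinuousOn (fun y => g y * u y 0) (Icc 0 x) :=
      hg.mul (hu.uncurry_right 0 (left_mem_Icc.2 (ht.1.trans ht.2)))
    have hinner : Continuous fun y => ∫ s in (0:ℝ)..t', gb y * U (y, s) :=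
      intervalIntegral.continuous_parametric_intervalIntegral_of_continuous' hgU 0 t'
    rw [intervalIntegral.integral_congr fun y hy => hsection y (uIcc_of_le hx ▸ hy),
      intervalIntegral.integral_add (hu0.intervalIntegrable_of_Icc hx)
        (hinner.intervalIntegrable _ _),
      intervalIntegral_intervalIntegral_swap ((hgU.continuousOn.integrableOn_compact
        (isCompact_uIcc.prod isCompact_uIcc)).mono_set
        (prod_mono uIoc_subset_uIcc uIoc_subset_uIcc))]
  convert hasDerivWithinAt_of_eq_add_integral hS hrepr ht using 1
  refine intervalIntegral.integral_congr fun y hy => ?_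
  rw [uIcc_of_le hx] at hy
  simp only [hgbg hy, hUut (mk_mem_prod hy ht)]

def triangle : Set (ℝ × ℝ) := {q | 0 ≤ q.2 ∧ q.2 ≤ q.1 ∧ q.1 ≤ 1}

theorem isClosed_triangle : IsClosed triangle :=
  (isClosed_le continuous_const continuous_snd).inter
    ((isClosed_le continuous_snd continuous_fst).inter
      (isClosed_le continuous_fst continuous_const))

theorem mk_mem_triangle {x y : ℝ} (hy : 0 ≤ y) (hyx : y ≤ x) (hx : x ≤ 1) :
    (x, y) ∈ triangle :=
  ⟨hy, hyx, hx⟩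

theorem ContinuousOn.section_triangle {F : ℝ → ℝ → ℝ}
    (hF : ContinuousOn (fun q : ℝ × ℝ => F q.1 q.2) triangle) {x : ℝ} (hx : x ≤ 1) :
    ContinuousOn (F x) (Icc 0 x) :=
  hF.comp (continuous_const.prodMk continuous_id).continuousOn
    fun _ hy => mk_mem_triangle hy.1 hy.2 hx

theorem hasDerivWithinAt_integral_kernel_mul {F Fx : ℝ → ℝ → ℝ} {h : ℝ → ℝ} {x : ℝ}
    (hF : ContinuousOn (fun q : ℝ × ℝ => F q.1 q.2) triangle)
    (hFx : ContinuousOn (fun q : ℝ × ℝ => Fx q.1 q.2) triangle)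
    (hderiv : ∀ x y, 0 ≤ y → y ≤ x → x ≤ 1 →
      HasDerivWithinAt (fun x' => F x' y) (Fx x y) (Icc y 1) x)
    (hh : ContinuousOn h (Icc 0 1)) (hx : x ∈ Icc (0:ℝ) 1) :
    HasDerivWithinAt (fun x' => ∫ y in (0:ℝ)..x', F x' y * h y)
      (F x x * h x + ∫ y in (0:ℝ)..x, Fx x y * h y) (Icc 0 1) x := by
  -- Writing `F x' y = F y y + ∫_y^x' Fx s y ds` and swapping the integrals over the triangle
  -- exhibits the integral as a primitive of the claimed derivative.
  obtain ⟨Fb, hFb, hFbF⟩ := hF.exists_continuous_eqOn isClosed_triangle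
  obtain ⟨Fxb, hFxb, hFxbFx⟩ := hFx.exists_continuous_eqOn isClosed_triangle
  obtain ⟨hb, hhb, hhbh⟩ := hh.exists_continuous_eqOn isClosed_Icc
  set k : ℝ → ℝ → ℝ := fun s y => Fxb (s, y) * hb y
  have hk : Continuous (Function.uncurry k) := hFxb.mul (hhb.comp continuous_snd)
  set D : ℝ → ℝ := fun s => Fb (s, s) * hb s + ∫ y in (0:ℝ)..s, k s y
  have hdiag : Continuous fun s => Fb (s, s) * hb s :=
    (hFb.comp (continuous_id.prodMk continuous_id)).mul hhb
  have hprim : Continuous fun s => ∫ y in (0:ℝ)..s, k s y :=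
    intervalIntegral.continuous_parametric_intervalIntegral_of_continuous hk continuous_id
  have hsection : ∀ x' ∈ Icc (0:ℝ) 1, ∀ y ∈ Icc 0 x',
      F x' y * h y = Fb (y, y) * hb y + ∫ s in y..x', k s y := by
    intro x' hx' y hy
    have hFxy : ContinuousOn (fun s => Fx s y) (Icc y 1) :=
      hFx.comp (continuous_id.prodMk continuous_const).continuousOn
        fun s (hs : s ∈ Icc y 1) => mk_mem_triangle hy.1 hs.1 hs.2
    rw [eq_add_integral_of_hasDerivWithinAt hy.2 hx'.2
        (fun s hs => hderiv s y hy.1 hs.1 hs.2) hFxy,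
      add_mul, ← intervalIntegral.integral_mul_const,
      hFbF (mk_mem_triangle hy.1 le_rfl (hy.2.trans hx'.2)), hhbh ⟨hy.1, hy.2.trans hx'.2⟩]
    refine congrArg _ (intervalIntegral.integral_congr fun s hs => ?_)
    rw [uIcc_of_le hy.2] at hs
    simp only [k, hFxbFx (mk_mem_triangle hy.1 hs.1 (hs.2.trans hx'.2)),
      hhbh ⟨hy.1, hy.2.trans hx'.2⟩]
  have hrepr : ∀ x' ∈ Icc (0:ℝ) 1, (∫ y in (0:ℝ)..x', F x' y * h y)
      = (∫ y in (0:ℝ)..0, F 0 y * h y) + ∫ s in (0:ℝ)..x', D s := by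
    intro x' hx'
    have hupper : Continuous fun y => ∫ s in y..x', k s y :=
      continuous_parametric_intervalIntegral_lower (k := fun y s => k s y)
        (hk.comp continuous_swap) x'
    rw [intervalIntegral.integral_same, zero_add,
      intervalIntegral.integral_congr fun y hy => hsection x' hx' y (uIcc_of_le hx'.1 ▸ hy),
      intervalIntegral.integral_add (hdiag.intervalIntegrable _ _) (hupper.intervalIntegrable _ _),
      intervalIntegral_intervalIntegral_swap_triangle hk hx'.1,
      ← intervalIntegral.integral_add (hdiag.intervalIntegrable _ _) (hprim.intervalIntegrable _ _)]
  convert hasDerivWithinAt_of_eq_add_integral (hdiag.add hprim) hrepr hx using 1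
  show _ = Fb (x, x) * hb x + ∫ y in (0:ℝ)..x, Fxb (x, y) * hb y
  rw [hFbF (mk_mem_triangle hx.1 le_rfl hx.2), hhbh hx]
  refine congrArg _ (intervalIntegral.integral_congr fun y hy => ?_)
  rw [uIcc_of_le hx.1] at hy
  simp only [hFxbFx (mk_mem_triangle hy.1 hy.2 hx.2), hhbh ⟨hy.1, hy.2.trans hx.2⟩]

structure IsC1OnTriangle (F Fx Fy : ℝ → ℝ → ℝ) : Prop where
  continuousOn : ContinuousOn (fun q : ℝ × ℝ => F q.1 q.2) triangle
  hasDerivWithinAt_fst : ∀ x y, 0 ≤ y → y ≤ x → x ≤ 1 →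
    HasDerivWithinAt (fun x' => F x' y) (Fx x y) (Icc y 1) x
  hasDerivWithinAt_snd : ∀ x y, 0 ≤ y → y ≤ x → x ≤ 1 →
    HasDerivWithinAt (fun y' => F x y') (Fy x y) (Icc 0 x) y
  continuousOn_fst : ContinuousOn (fun q : ℝ × ℝ => Fx q.1 q.2) triangle
  continuousOn_snd : ContinuousOn (fun q : ℝ × ℝ => Fy q.1 q.2) triangle

structure IsC1OnRect (T : ℝ) (u ux ut : ℝ → ℝ → ℝ) : Prop where
  continuousOn : ContinuousOn (fun q : ℝ × ℝ => u q.1 q.2) (Icc 0 1 ×ˢ Icc 0 T)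
  hasDerivWithinAt_fst : ∀ x ∈ Icc (0:ℝ) 1, ∀ t ∈ Icc (0:ℝ) T,
    HasDerivWithinAt (fun x' => u x' t) (ux x t) (Icc 0 1) x
  hasDerivWithinAt_snd : ∀ x ∈ Icc (0:ℝ) 1, ∀ t ∈ Icc (0:ℝ) T,
    HasDerivWithinAt (fun t' => u x t') (ut x t) (Icc 0 T) t
  continuousOn_fst : ContinuousOn (fun q : ℝ × ℝ => ux q.1 q.2) (Icc 0 1 ×ˢ Icc 0 T)
  continuousOn_snd : ContinuousOn (fun q : ℝ × ℝ => ut q.1 q.2) (Icc 0 1 ×ˢ Icc 0 T)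

/-- The common shape of α (`u = z`, `c = -q1`) and β (`u = w`, `c = q2`): `hdiag` and `hbdry`
are the kernel conditions on the diagonal `y = x` and on the edge `y = 0`. -/
theorem transport_of_kernel_equations {q1 q2 d1 d2 p c T x t : ℝ} {n : ℕ}
    {A : Matrix (Fin n) (Fin n) ℝ} {B : Fin n → ℝ} {r Y : ℝ → Fin n → ℝ}
    {F Fx Fy G Gx Gy z zx zt w wx wt u ux ut a : ℝ → ℝ → ℝ}
    (hF : IsC1OnTriangle F Fx Fy) (hG : IsC1OnTriangle G Gx Gy)
    (hz : IsC1OnRect T z zx zt) (hw : IsC1OnRect T w wx wt)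
    (hzpde : ∀ x ∈ Icc (0:ℝ) 1, ∀ t ∈ Icc (0:ℝ) T, zt x t = -q1 * zx x t + d1 * w x t)
    (hwpde : ∀ x ∈ Icc (0:ℝ) 1, ∀ t ∈ Icc (0:ℝ) T, wt x t = q2 * wx x t + d2 * z x t)
    (hx : x ∈ Icc (0:ℝ) 1) (ht : t ∈ Icc (0:ℝ) T)
    (hz0 : z 0 t = p * w 0 t) (hY : HasDerivAt Y (A *ᵥ Y t + w 0 t • B) t)
    (hc : c ≠ 0) (hr : HasDerivAt r (c⁻¹ • (r x ᵥ* A)) x)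
    (hux : HasDerivWithinAt (fun x' => u x' t) (ux x t) (Icc 0 1) x)
    (hut : HasDerivWithinAt (fun t' => u x t') (ut x t) (Icc 0 T) t)
    (hdiag : ut x t - c * ux x t + (q1 + c) * F x x * z x t + (c - q2) * G x x * w x t = 0)
    (hbdry : q1 * p * F x 0 + r x ⬝ᵥ B = q2 * G x 0)
    (hFpde : ∀ y ∈ Icc 0 x, c * Fx x y - q1 * Fy x y - d2 * G x y = 0)
    (hGpde : ∀ y ∈ Icc 0 x, c * Gx x y + q2 * Gy x y - d1 * F x y = 0)
    (ha : ∀ x t, a x t = u x t - (∫ y in (0:ℝ)..x, F x y * z y t)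
      - (∫ y in (0:ℝ)..x, G x y * w y t) - r x ⬝ᵥ Y t) :
    ∃ e, HasDerivWithinAt (fun x' => a x' t) e (Icc 0 1) x ∧
      HasDerivWithinAt (fun t' => a x t') (c * e) (Icc 0 T) t := by
  obtain ⟨hx0, hx1⟩ := hx
  have hsub : Icc 0 x ⊆ Icc 0 1 := Icc_subset_Icc le_rfl hx1
  have hsubT : Icc 0 x ×ˢ Icc 0 T ⊆ Icc 0 1 ×ˢ Icc 0 T := prod_mono hsub subset_rfl
  have hzt := hz.continuousOn.uncurry_right t ht
  have hwt := hw.continuousOn.uncurry_right t ht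
  have hDx := (((hux.sub (hasDerivWithinAt_integral_kernel_mul hF.continuousOn
    hF.continuousOn_fst hF.hasDerivWithinAt_fst hzt ⟨hx0, hx1⟩)).sub
    (hasDerivWithinAt_integral_kernel_mul hG.continuousOn hG.continuousOn_fst
      hG.hasDerivWithinAt_fst hwt ⟨hx0, hx1⟩)).sub
    (hr.dotProduct (hasDerivAt_const x (Y t))).hasDerivWithinAt).congr
    (fun y _ => ha y t) (ha x t)
  refine ⟨_, hDx, ?_⟩
  have hDt := (((hut.sub (hasDerivWithinAt_integral_mul_param hx0
    (hF.continuousOn.section_triangle hx1) (hz.continuousOn.mono hsubT)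
    (hz.continuousOn_snd.mono hsubT) (fun y hy => hz.hasDerivWithinAt_snd y (hsub hy)) ht)).sub
    (hasDerivWithinAt_integral_mul_param hx0
    (hG.continuousOn.section_triangle hx1) (hw.continuousOn.mono hsubT)
    (hw.continuousOn_snd.mono hsubT) (fun y hy => hw.hasDerivWithinAt_snd y (hsub hy)) ht)).sub
    ((hasDerivAt_const t (r x)).dotProduct hY).hasDerivWithinAt).congr
    (fun s _ => ha x s) (ha x t)
  refine hDt.congr_deriv ?_
  have hIF := integral_mul_eq_of_eq_deriv_add hx0
    (fun y hy => hF.hasDerivWithinAt_snd x y hy.1 hy.2 hx1)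
    (fun y hy => (hz.hasDerivWithinAt_fst y (hsub hy) t ht).mono hsub)
    (hF.continuousOn_snd.section_triangle hx1)
    ((hz.continuousOn_fst.uncurry_right t ht).mono hsub) (hwt.mono hsub)
    (fun y hy => hzpde y (hsub hy) t ht)
  have hIG := integral_mul_eq_of_eq_deriv_add hx0
    (fun y hy => hG.hasDerivWithinAt_snd x y hy.1 hy.2 hx1)
    (fun y hy => (hw.hasDerivWithinAt_fst y (hsub hy) t ht).mono hsub)
    (hG.continuousOn_snd.section_triangle hx1)
    ((hw.continuousOn_fst.uncurry_right t ht).mono hsub) (hzt.mono hsub)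
    (fun y hy => hwpde y (hsub hy) t ht)
  have hKF := linear_combination_integral_mul_eq_zero (c₁ := c) (c₂ := -q1) (c₃ := -d2) hx0
    (hF.continuousOn_fst.section_triangle hx1) (hF.continuousOn_snd.section_triangle hx1)
    (hG.continuousOn.section_triangle hx1) (hzt.mono hsub)
    fun y hy => by linear_combination hFpde y hy
  have hKG := linear_combination_integral_mul_eq_zero (c₁ := c) (c₂ := q2) (c₃ := -d1) hx0
    (hG.continuousOn_fst.section_triangle hx1) (hG.continuousOn_snd.section_triangle hx1)
    (hF.continuousOn.section_triangle hx1) (hwt.mono hsub)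
    fun y hy => by linear_combination hGpde y hy
  rw [hIF, hIG, dotProduct_add, Matrix.dotProduct_mulVec, dotProduct_smul, smul_eq_mul, hz0,
    smul_dotProduct, smul_eq_mul, dotProduct_zero, zero_dotProduct]
  linear_combination hdiag - w 0 t * hbdry + hKF + hKG + (r x ᵥ* A ⬝ᵥ Y t) * mul_inv_cancel₀ hc

theorem second_backstepping_transformation_general
    (q1 q2 : ℝ) (hq1 : 0 < q1) (hq2 : 0 < q2) (d1 d2 : ℝ)
    (p : ℝ) (hp : p ≠ 0)
    (n : ℕ)
    (A : Matrix (Fin n) (Fin n) ℝ) (B K : Fin n → ℝ)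
    (lam gam : ℝ → Fin n → ℝ)
    (hlam : ∀ x : ℝ, lam x = Matrix.vecMul K (NormedSpace.exp ((x / q2) • A)))
    (hgam : ∀ x : ℝ, gam x =
      p • Matrix.vecMul K (NormedSpace.exp ((-(x / q1)) • A)))
    (T : ℝ)
    -- kernels φ, ψ, Ψ, Φ, continuously differentiable on the triangle 𝒟:
    (φ ψ Ψ Φ φx φy ψx ψy Ψx Ψy Φx Φy : ℝ → ℝ → ℝ)
    (hφc : ContinuousOn (fun q : ℝ × ℝ => φ q.1 q.2)
      {q : ℝ × ℝ | 0 ≤ q.2 ∧ q.2 ≤ q.1 ∧ q.1 ≤ 1})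
    (hψc : ContinuousOn (fun q : ℝ × ℝ => ψ q.1 q.2)
      {q : ℝ × ℝ | 0 ≤ q.2 ∧ q.2 ≤ q.1 ∧ q.1 ≤ 1})
    (hΨc : ContinuousOn (fun q : ℝ × ℝ => Ψ q.1 q.2)
      {q : ℝ × ℝ | 0 ≤ q.2 ∧ q.2 ≤ q.1 ∧ q.1 ≤ 1})
    (hΦc : ContinuousOn (fun q : ℝ × ℝ => Φ q.1 q.2)
      {q : ℝ × ℝ | 0 ≤ q.2 ∧ q.2 ≤ q.1 ∧ q.1 ≤ 1})
    (hφx : ∀ x y, 0 ≤ y → y ≤ x → x ≤ 1 →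
      HasDerivWithinAt (fun x' => φ x' y) (φx x y) (Icc y 1) x)
    (hφy : ∀ x y, 0 ≤ y → y ≤ x → x ≤ 1 →
      HasDerivWithinAt (fun y' => φ x y') (φy x y) (Icc 0 x) y)
    (hψx : ∀ x y, 0 ≤ y → y ≤ x → x ≤ 1 →
      HasDerivWithinAt (fun x' => ψ x' y) (ψx x y) (Icc y 1) x)
    (hψy : ∀ x y, 0 ≤ y → y ≤ x → x ≤ 1 →
      HasDerivWithinAt (fun y' => ψ x y') (ψy x y) (Icc 0 x) y)
    (hΨx : ∀ x y, 0 ≤ y → y ≤ x → x ≤ 1 →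
      HasDerivWithinAt (fun x' => Ψ x' y) (Ψx x y) (Icc y 1) x)
    (hΨy : ∀ x y, 0 ≤ y → y ≤ x → x ≤ 1 →
      HasDerivWithinAt (fun y' => Ψ x y') (Ψy x y) (Icc 0 x) y)
    (hΦx : ∀ x y, 0 ≤ y → y ≤ x → x ≤ 1 →
      HasDerivWithinAt (fun x' => Φ x' y) (Φx x y) (Icc y 1) x)
    (hΦy : ∀ x y, 0 ≤ y → y ≤ x → x ≤ 1 →
      HasDerivWithinAt (fun y' => Φ x y') (Φy x y) (Icc 0 x) y)
    (hφxc : ContinuousOn (fun q : ℝ × ℝ => φx q.1 q.2)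
      {q : ℝ × ℝ | 0 ≤ q.2 ∧ q.2 ≤ q.1 ∧ q.1 ≤ 1})
    (hφyc : ContinuousOn (fun q : ℝ × ℝ => φy q.1 q.2)
      {q : ℝ × ℝ | 0 ≤ q.2 ∧ q.2 ≤ q.1 ∧ q.1 ≤ 1})
    (hψxc : ContinuousOn (fun q : ℝ × ℝ => ψx q.1 q.2)
      {q : ℝ × ℝ | 0 ≤ q.2 ∧ q.2 ≤ q.1 ∧ q.1 ≤ 1})
    (hψyc : ContinuousOn (fun q : ℝ × ℝ => ψy q.1 q.2)
      {q : ℝ × ℝ | 0 ≤ q.2 ∧ q.2 ≤ q.1 ∧ q.1 ≤ 1})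
    (hΨxc : ContinuousOn (fun q : ℝ × ℝ => Ψx q.1 q.2)
      {q : ℝ × ℝ | 0 ≤ q.2 ∧ q.2 ≤ q.1 ∧ q.1 ≤ 1})
    (hΨyc : ContinuousOn (fun q : ℝ × ℝ => Ψy q.1 q.2)
      {q : ℝ × ℝ | 0 ≤ q.2 ∧ q.2 ≤ q.1 ∧ q.1 ≤ 1})
    (hΦxc : ContinuousOn (fun q : ℝ × ℝ => Φx q.1 q.2)
      {q : ℝ × ℝ | 0 ≤ q.2 ∧ q.2 ≤ q.1 ∧ q.1 ≤ 1})
    (hΦyc : ContinuousOn (fun q : ℝ × ℝ => Φy q.1 q.2)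
      {q : ℝ × ℝ | 0 ≤ q.2 ∧ q.2 ≤ q.1 ∧ q.1 ≤ 1})
    -- the kernel equations on 𝒟:
    (hψpde : ∀ x y, 0 ≤ y → y ≤ x → x ≤ 1 →
      q2 * ψy x y - q1 * ψx x y - d1 * φ x y = 0)
    (hφpde : ∀ x y, 0 ≤ y → y ≤ x → x ≤ 1 →
      q1 * φx x y + q1 * φy x y + d2 * ψ x y = 0)
    (hΨpde : ∀ x y, 0 ≤ y → y ≤ x → x ≤ 1 →
      q2 * Ψx x y - q1 * Ψy x y - d2 * Φ x y = 0)
    (hΦpde : ∀ x y, 0 ≤ y → y ≤ x → x ≤ 1 →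
      q2 * Φx x y + q2 * Φy x y - d1 * Ψ x y = 0)
    (hψbc : ∀ x ∈ Icc (0:ℝ) 1, ψ x x = d1 / (q1 + q2))
    (hφbc : ∀ x ∈ Icc (0:ℝ) 1, φ x 0 =
      (q2 / (q1 * p)) * ψ x 0 - (1 / (q1 * p)) * dotProduct (gam x) B)
    (hΨbc : ∀ x ∈ Icc (0:ℝ) 1, Ψ x x = -d2 / (q1 + q2))
    (hΦbc : ∀ x ∈ Icc (0:ℝ) 1, Φ x 0 =
      (q1 * p / q2) * Ψ x 0 + (1 / q2) * dotProduct (lam x) B)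
    -- the plant: z, w continuously differentiable solutions on [0,1] × [0,T]:
    (z w zx zt wx wt : ℝ → ℝ → ℝ)
    (hzc : ContinuousOn (fun q : ℝ × ℝ => z q.1 q.2) (Icc 0 1 ×ˢ Icc 0 T))
    (hwc : ContinuousOn (fun q : ℝ × ℝ => w q.1 q.2) (Icc 0 1 ×ˢ Icc 0 T))
    (hzx : ∀ x ∈ Icc (0:ℝ) 1, ∀ t ∈ Icc (0:ℝ) T,
      HasDerivWithinAt (fun x' => z x' t) (zx x t) (Icc 0 1) x)
    (hzt : ∀ x ∈ Icc (0:ℝ) 1, ∀ t ∈ Icc (0:ℝ) T,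
      HasDerivWithinAt (fun t' => z x t') (zt x t) (Icc 0 T) t)
    (hwx : ∀ x ∈ Icc (0:ℝ) 1, ∀ t ∈ Icc (0:ℝ) T,
      HasDerivWithinAt (fun x' => w x' t) (wx x t) (Icc 0 1) x)
    (hwt : ∀ x ∈ Icc (0:ℝ) 1, ∀ t ∈ Icc (0:ℝ) T,
      HasDerivWithinAt (fun t' => w x t') (wt x t) (Icc 0 T) t)
    (hzxc : ContinuousOn (fun q : ℝ × ℝ => zx q.1 q.2) (Icc 0 1 ×ˢ Icc 0 T))
    (hztc : ContinuousOn (fun q : ℝ × ℝ => zt q.1 q.2) (Icc 0 1 ×ˢ Icc 0 T))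
    (hwxc : ContinuousOn (fun q : ℝ × ℝ => wx q.1 q.2) (Icc 0 1 ×ˢ Icc 0 T))
    (hwtc : ContinuousOn (fun q : ℝ × ℝ => wt q.1 q.2) (Icc 0 1 ×ˢ Icc 0 T))
    (hzpde : ∀ x ∈ Icc (0:ℝ) 1, ∀ t ∈ Icc (0:ℝ) T,
      zt x t = -q1 * zx x t + d1 * w x t)
    (hwpde : ∀ x ∈ Icc (0:ℝ) 1, ∀ t ∈ Icc (0:ℝ) T,
      wt x t = q2 * wx x t + d2 * z x t)
    (hzwbc : ∀ t ∈ Icc (0:ℝ) T, z 0 t = p * w 0 t)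
    -- the distal ODE Ẏ = AY + B w(0,t):
    (Y : ℝ → Fin n → ℝ)
    (hY : ∀ t ∈ Icc (0:ℝ) T, HasDerivAt Y (A.mulVec (Y t) + w 0 t • B) t)
    -- the transformed states:
    (α β : ℝ → ℝ → ℝ)
    (hα : ∀ x t, α x t = z x t - (∫ y in (0:ℝ)..x, φ x y * z y t)
      - (∫ y in (0:ℝ)..x, ψ x y * w y t) - dotProduct (gam x) (Y t))
    (hβ : ∀ x t, β x t = w x t - (∫ y in (0:ℝ)..x, Ψ x y * z y t)
      - (∫ y in (0:ℝ)..x, Φ x y * w y t) - dotProduct (lam x) (Y t)) :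
    ∀ x ∈ Icc (0:ℝ) 1, ∀ t ∈ Icc (0:ℝ) T,
      (∃ e : ℝ, HasDerivWithinAt (fun x' => α x' t) e (Icc 0 1) x ∧
        HasDerivWithinAt (fun t' => α x t') (-q1 * e) (Icc 0 T) t) ∧
      (∃ e : ℝ, HasDerivWithinAt (fun x' => β x' t) e (Icc 0 1) x ∧
        HasDerivWithinAt (fun t' => β x t') (q2 * e) (Icc 0 T) t) ∧
      α 0 t = p * β 0 t ∧
      β 0 t = w 0 t - dotProduct K (Y t) := by
  intro x hx t ht
  have hφ : IsC1OnTriangle φ φx φy := ⟨hφc, hφx, hφy, hφxc, hφyc⟩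
  have hψ : IsC1OnTriangle ψ ψx ψy := ⟨hψc, hψx, hψy, hψxc, hψyc⟩
  have hΨ : IsC1OnTriangle Ψ Ψx Ψy := ⟨hΨc, hΨx, hΨy, hΨxc, hΨyc⟩
  have hΦ : IsC1OnTriangle Φ Φx Φy := ⟨hΦc, hΦx, hΦy, hΦxc, hΦyc⟩
  have hz : IsC1OnRect T z zx zt := ⟨hzc, hzx, hzt, hzxc, hztc⟩
  have hw : IsC1OnRect T w wx wt := ⟨hwc, hwx, hwt, hwxc, hwtc⟩
  have hgam' : HasDerivAt gam ((-q1)⁻¹ • (gam x ᵥ* A)) x := by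
    simp_rw [funext hgam, ← div_neg, Matrix.smul_vecMul, smul_comm _ p]
    exact (hasDerivAt_vecMul_exp_div_smul K A (-q1) x).const_smul p
  have hlam' : HasDerivAt lam (q2⁻¹ • (lam x ᵥ* A)) x := by
    simp_rw [funext hlam]
    exact hasDerivAt_vecMul_exp_div_smul K A q2 x
  have hβ0 : β 0 t = w 0 t - K ⬝ᵥ Y t := by simp [hβ, hlam]
  have hα0 : α 0 t = p * β 0 t := by
    simp only [hα, hβ0, hgam, hzwbc t ht, intervalIntegral.integral_same, zero_div, neg_zero,
      zero_smul, NormedSpace.exp_zero, Matrix.vecMul_one, smul_dotProduct, smul_eq_mul]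
    ring
  have hq12 : q1 + q2 ≠ 0 := (add_pos hq1 hq2).ne'
  refine ⟨transport_of_kernel_equations hφ hψ hz hw hzpde hwpde hx ht (hzwbc t ht) (hY t ht)
    (neg_ne_zero.2 hq1.ne') hgam' (hz.hasDerivWithinAt_fst x hx t ht)
    (hz.hasDerivWithinAt_snd x hx t ht) ?_ ?_
    (fun y hy => by linear_combination -hφpde x y hy.1 hy.2 hx.2)
    (fun y hy => by linear_combination hψpde x y hy.1 hy.2 hx.2) hα,
    transport_of_kernel_equations hΨ hΦ hz hw hzpde hwpde hx ht (hzwbc t ht) (hY t ht)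
    hq2.ne' hlam' (hw.hasDerivWithinAt_fst x hx t ht) (hw.hasDerivWithinAt_snd x hx t ht) ?_ ?_
    (fun y hy => by linear_combination hΨpde x y hy.1 hy.2 hx.2)
    (fun y hy => by linear_combination hΦpde x y hy.1 hy.2 hx.2) hβ, hα0, hβ0⟩
  · rw [hzpde x hx t ht, hψbc x hx]
    field_simp
    ring
  · rw [hφbc x hx]
    field_simp
    ring
  · rw [hwpde x hx t ht, hΨbc x hx]
    field_simp
    ring
  · rw [hΦbc x hx]
    field_simp

/-- The second (PDE) backstepping transformation: with
kernels `(φ, ψ, Ψ, Φ)` solving the kernel equations (A.1)–(A.10) on the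
triangle and `λ(x) = Kᵀ e^{Ax/q2}`, `γ(x) = p Kᵀ e^{-Ax/q1}`, the maps
`α = z - ∫φz - ∫ψw - γY`, `β = w - ∫Ψz - ∫Φw - λY` transform the plant into
`α_t = -q1 α_x`, `β_t = q2 β_x`, `α(0,t) = p β(0,t)`,
`β(0,t) = w(0,t) - Kᵀ Y(t)`. -/
theorem second_backstepping_transformation
    (q1 q2 : ℝ) (hq1 : 0 < q1) (hq2 : 0 < q2) (d1 d2 : ℝ)
    (p : ℝ) (hp : p ≠ 0)
    (n : ℕ) (hn : 0 < n)
    (A : Matrix (Fin n) (Fin n) ℝ) (B K : Fin n → ℝ)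
    (lam gam : ℝ → Fin n → ℝ)
    (hlam : ∀ x : ℝ, lam x = Matrix.vecMul K (NormedSpace.exp ((x / q2) • A)))
    (hgam : ∀ x : ℝ, gam x =
      p • Matrix.vecMul K (NormedSpace.exp ((-(x / q1)) • A)))
    (T : ℝ) (hT : 0 < T)
    -- kernels φ, ψ, Ψ, Φ, continuously differentiable on the triangle 𝒟:
    (φ ψ Ψ Φ φx φy ψx ψy Ψx Ψy Φx Φy : ℝ → ℝ → ℝ)
    (hφc : ContinuousOn (fun q : ℝ × ℝ => φ q.1 q.2)
      {q : ℝ × ℝ | 0 ≤ q.2 ∧ q.2 ≤ q.1 ∧ q.1 ≤ 1})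
    (hψc : ContinuousOn (fun q : ℝ × ℝ => ψ q.1 q.2)
      {q : ℝ × ℝ | 0 ≤ q.2 ∧ q.2 ≤ q.1 ∧ q.1 ≤ 1})
    (hΨc : ContinuousOn (fun q : ℝ × ℝ => Ψ q.1 q.2)
      {q : ℝ × ℝ | 0 ≤ q.2 ∧ q.2 ≤ q.1 ∧ q.1 ≤ 1})
    (hΦc : ContinuousOn (fun q : ℝ × ℝ => Φ q.1 q.2)
      {q : ℝ × ℝ | 0 ≤ q.2 ∧ q.2 ≤ q.1 ∧ q.1 ≤ 1})
    (hφx : ∀ x y, 0 ≤ y → y ≤ x → x ≤ 1 →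
      HasDerivWithinAt (fun x' => φ x' y) (φx x y) (Icc y 1) x)
    (hφy : ∀ x y, 0 ≤ y → y ≤ x → x ≤ 1 →
      HasDerivWithinAt (fun y' => φ x y') (φy x y) (Icc 0 x) y)
    (hψx : ∀ x y, 0 ≤ y → y ≤ x → x ≤ 1 →
      HasDerivWithinAt (fun x' => ψ x' y) (ψx x y) (Icc y 1) x)
    (hψy : ∀ x y, 0 ≤ y → y ≤ x → x ≤ 1 →
      HasDerivWithinAt (fun y' => ψ x y') (ψy x y) (Icc 0 x) y)
    (hΨx : ∀ x y, 0 ≤ y → y ≤ x → x ≤ 1 →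
      HasDerivWithinAt (fun x' => Ψ x' y) (Ψx x y) (Icc y 1) x)
    (hΨy : ∀ x y, 0 ≤ y → y ≤ x → x ≤ 1 →
      HasDerivWithinAt (fun y' => Ψ x y') (Ψy x y) (Icc 0 x) y)
    (hΦx : ∀ x y, 0 ≤ y → y ≤ x → x ≤ 1 →
      HasDerivWithinAt (fun x' => Φ x' y) (Φx x y) (Icc y 1) x)
    (hΦy : ∀ x y, 0 ≤ y → y ≤ x → x ≤ 1 →
      HasDerivWithinAt (fun y' => Φ x y') (Φy x y) (Icc 0 x) y)
    (hφxc : ContinuousOn (fun q : ℝ × ℝ => φx q.1 q.2)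
      {q : ℝ × ℝ | 0 ≤ q.2 ∧ q.2 ≤ q.1 ∧ q.1 ≤ 1})
    (hφyc : ContinuousOn (fun q : ℝ × ℝ => φy q.1 q.2)
      {q : ℝ × ℝ | 0 ≤ q.2 ∧ q.2 ≤ q.1 ∧ q.1 ≤ 1})
    (hψxc : ContinuousOn (fun q : ℝ × ℝ => ψx q.1 q.2)
      {q : ℝ × ℝ | 0 ≤ q.2 ∧ q.2 ≤ q.1 ∧ q.1 ≤ 1})
    (hψyc : ContinuousOn (fun q : ℝ × ℝ => ψy q.1 q.2)
      {q : ℝ × ℝ | 0 ≤ q.2 ∧ q.2 ≤ q.1 ∧ q.1 ≤ 1})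
    (hΨxc : ContinuousOn (fun q : ℝ × ℝ => Ψx q.1 q.2)
      {q : ℝ × ℝ | 0 ≤ q.2 ∧ q.2 ≤ q.1 ∧ q.1 ≤ 1})
    (hΨyc : ContinuousOn (fun q : ℝ × ℝ => Ψy q.1 q.2)
      {q : ℝ × ℝ | 0 ≤ q.2 ∧ q.2 ≤ q.1 ∧ q.1 ≤ 1})
    (hΦxc : ContinuousOn (fun q : ℝ × ℝ => Φx q.1 q.2)
      {q : ℝ × ℝ | 0 ≤ q.2 ∧ q.2 ≤ q.1 ∧ q.1 ≤ 1})
    (hΦyc : ContinuousOn (fun q : ℝ × ℝ => Φy q.1 q.2)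
      {q : ℝ × ℝ | 0 ≤ q.2 ∧ q.2 ≤ q.1 ∧ q.1 ≤ 1})
    -- the kernel equations on 𝒟:
    (hψpde : ∀ x y, 0 ≤ y → y ≤ x → x ≤ 1 →
      q2 * ψy x y - q1 * ψx x y - d1 * φ x y = 0)
    (hφpde : ∀ x y, 0 ≤ y → y ≤ x → x ≤ 1 →
      q1 * φx x y + q1 * φy x y + d2 * ψ x y = 0)
    (hΨpde : ∀ x y, 0 ≤ y → y ≤ x → x ≤ 1 →
      q2 * Ψx x y - q1 * Ψy x y - d2 * Φ x y = 0)
    (hΦpde : ∀ x y, 0 ≤ y → y ≤ x → x ≤ 1 →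
      q2 * Φx x y + q2 * Φy x y - d1 * Ψ x y = 0)
    (hψbc : ∀ x ∈ Icc (0:ℝ) 1, ψ x x = d1 / (q1 + q2))
    (hφbc : ∀ x ∈ Icc (0:ℝ) 1, φ x 0 =
      (q2 / (q1 * p)) * ψ x 0 - (1 / (q1 * p)) * dotProduct (gam x) B)
    (hΨbc : ∀ x ∈ Icc (0:ℝ) 1, Ψ x x = -d2 / (q1 + q2))
    (hΦbc : ∀ x ∈ Icc (0:ℝ) 1, Φ x 0 =
      (q1 * p / q2) * Ψ x 0 + (1 / q2) * dotProduct (lam x) B)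
    -- the plant: z, w continuously differentiable solutions on [0,1] × [0,T]:
    (z w zx zt wx wt : ℝ → ℝ → ℝ)
    (hzc : ContinuousOn (fun q : ℝ × ℝ => z q.1 q.2) (Icc 0 1 ×ˢ Icc 0 T))
    (hwc : ContinuousOn (fun q : ℝ × ℝ => w q.1 q.2) (Icc 0 1 ×ˢ Icc 0 T))
    (hzx : ∀ x ∈ Icc (0:ℝ) 1, ∀ t ∈ Icc (0:ℝ) T,
      HasDerivWithinAt (fun x' => z x' t) (zx x t) (Icc 0 1) x)
    (hzt : ∀ x ∈ Icc (0:ℝ) 1, ∀ t ∈ Icc (0:ℝ) T,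
      HasDerivWithinAt (fun t' => z x t') (zt x t) (Icc 0 T) t)
    (hwx : ∀ x ∈ Icc (0:ℝ) 1, ∀ t ∈ Icc (0:ℝ) T,
      HasDerivWithinAt (fun x' => w x' t) (wx x t) (Icc 0 1) x)
    (hwt : ∀ x ∈ Icc (0:ℝ) 1, ∀ t ∈ Icc (0:ℝ) T,
      HasDerivWithinAt (fun t' => w x t') (wt x t) (Icc 0 T) t)
    (hzxc : ContinuousOn (fun q : ℝ × ℝ => zx q.1 q.2) (Icc 0 1 ×ˢ Icc 0 T))
    (hztc : ContinuousOn (fun q : ℝ × ℝ => zt q.1 q.2) (Icc 0 1 ×ˢ Icc 0 T))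
    (hwxc : ContinuousOn (fun q : ℝ × ℝ => wx q.1 q.2) (Icc 0 1 ×ˢ Icc 0 T))
    (hwtc : ContinuousOn (fun q : ℝ × ℝ => wt q.1 q.2) (Icc 0 1 ×ˢ Icc 0 T))
    (hzpde : ∀ x ∈ Icc (0:ℝ) 1, ∀ t ∈ Icc (0:ℝ) T,
      zt x t = -q1 * zx x t + d1 * w x t)
    (hwpde : ∀ x ∈ Icc (0:ℝ) 1, ∀ t ∈ Icc (0:ℝ) T,
      wt x t = q2 * wx x t + d2 * z x t)
    (hzwbc : ∀ t ∈ Icc (0:ℝ) T, z 0 t = p * w 0 t)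
    -- the distal ODE Ẏ = AY + B w(0,t):
    (Y : ℝ → Fin n → ℝ)
    (hY : ∀ t ∈ Icc (0:ℝ) T, HasDerivAt Y (A.mulVec (Y t) + w 0 t • B) t)
    -- the transformed states:
    (α β : ℝ → ℝ → ℝ)
    (hα : ∀ x t, α x t = z x t - (∫ y in (0:ℝ)..x, φ x y * z y t)
      - (∫ y in (0:ℝ)..x, ψ x y * w y t) - dotProduct (gam x) (Y t))
    (hβ : ∀ x t, β x t = w x t - (∫ y in (0:ℝ)..x, Ψ x y * z y t)
      - (∫ y in (0:ℝ)..x, Φ x y * w y t) - dotProduct (lam x) (Y t)) :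
    ∀ x ∈ Icc (0:ℝ) 1, ∀ t ∈ Icc (0:ℝ) T,
      (∃ e : ℝ, HasDerivWithinAt (fun x' => α x' t) e (Icc 0 1) x ∧
        HasDerivWithinAt (fun t' => α x t') (-q1 * e) (Icc 0 T) t) ∧
      (∃ e : ℝ, HasDerivWithinAt (fun x' => β x' t) e (Icc 0 1) x ∧
        HasDerivWithinAt (fun t' => β x t') (q2 * e) (Icc 0 T) t) ∧
      α 0 t = p * β 0 t ∧
      β 0 t = w 0 t - dotProduct K (Y t) :=
  second_backstepping_transformation_general q1 q2 hq1 hq2 d1 d2 p hp n A B K lam gam hlam hgam T φ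
    ψ Ψ Φ φx φy ψx ψy Ψx Ψy Φx Φy hφc hψc hΨc hΦc hφx hφy hψx hψy hΨx hΨy hΦx hΦy hφxc hφyc hψxc
    hψyc hΨxc hΨyc hΦxc hΦyc hψpde hφpde hΨpde hΦpde hψbc hφbc hΨbc hΦbc z w zx zt wx wt hzc hwc hzx
    hzt hwx hwt hzxc hztc hwxc hwtc hzpde hwpde hzwbc Y hY α β hα hβ
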